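/- arXiv:2202.09724 — 6 statements merged into one kernel-verified Lean document; each statement's English description precedes it below -/
import Mathlib

section
/- Generalized Neyman–Pearson lemma (equality constraints): Let ν be a σ-finite measure on a measurable space 𝒳 and let φ₀, φ₁, …, φ_m be ν-integrable real-valued functions. Fix constants c₁,…,c_m ∈ ℝ and t₁,…,t_m ∈ ℝ. Suppose f* : 𝒳 → [0,1] satisfies f*(x)=1 whenever φ₀(x) > Σᵢ cᵢ φᵢ(x) and f*(x)=0 whenever φ₀(x) < Σᵢ cᵢ φᵢ(x), and suppose ∫ f* φᵢ dν = tᵢ for all i=1,…,m. Then for every measurable f : 𝒳 → [0,1] with ∫ f φᵢ dν = tᵢ for all i, one has ∫ f φ₀ dν ≤ ∫ f* φ₀ dν. -/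
open MeasureTheory

/-! The pointwise inequality `f φ ≤ f* φ` for `φ := φ₀ - ∑ cᵢ φᵢ` holds because `f*` takes the
extreme value `1` where `φ > 0` and `0` where `φ < 0`. Integrating it and using that `f` and `f*`
share the constraint values `tᵢ` turns it into `∫ f φ₀ - ∑ cᵢ tᵢ ≤ ∫ f* φ₀ - ∑ cᵢ tᵢ`. -/

lemma mul_le_mul_of_threshold {a b φ : ℝ} (ha : 0 < φ → b = 1) (hb : φ < 0 → b = 0)
    (h0 : 0 ≤ a) (h1 : a ≤ 1) : a * φ ≤ b * φ := by
  rcases lt_trichotomy φ 0 with hφ | rfl | hφ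
  · rw [hb hφ]; nlinarith
  · simp
  · rw [ha hφ]; nlinarith

section

variable {X : Type*} [MeasurableSpace X] {ν : Measure X}

lemma MeasureTheory.Integrable.unitInterval_mul {g ψ : X → ℝ} (hψ : Integrable ψ ν)
    (hg : Measurable g) (hg0 : ∀ x, 0 ≤ g x) (hg1 : ∀ x, g x ≤ 1) : Integrable (fun x => g x * ψ x) ν :=
  hψ.bdd_mul hg.aestronglyMeasurable (c := 1) <| ae_of_all _ fun x => by
    rw [Real.norm_eq_abs, abs_le]; exact ⟨by linarith [hg0 x], hg1 x⟩

lemma integral_mul_sub_sum {ι : Type*} [Fintype ι] {g φ₀ : X → ℝ} {φ : ι → X → ℝ} (c : ι → ℝ)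
    (h₀ : Integrable (fun x => g x * φ₀ x) ν) (h : ∀ i, Integrable (fun x => g x * φ i x) ν) :
    ∫ x, g x * (φ₀ x - ∑ i, c i * φ i x) ∂ν
      = ∫ x, g x * φ₀ x ∂ν - ∑ i, c i * ∫ x, g x * φ i x ∂ν := by
  simp_rw [mul_sub, Finset.mul_sum, mul_left_comm (g _)]
  rw [integral_sub h₀ (integrable_finsetSum _ fun i _ => (h i).const_mul (c i)),
    integral_finsetSum _ fun i _ => (h i).const_mul (c i)]
  simp_rw [integral_const_mul]

end

theorem stmt_2_general {X : Type*} [MeasurableSpace X] (ν : Measure X)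
    (m : ℕ) (φ0 : X → ℝ) (φ : Fin m → X → ℝ)
    (hφ0 : Integrable φ0 ν) (hφ : ∀ i, Integrable (φ i) ν)
    (c t : Fin m → ℝ)
    (fstar : X → ℝ) (hfm : Measurable fstar)
    (hf0 : ∀ x, 0 ≤ fstar x) (hf1 : ∀ x, fstar x ≤ 1)
    (hgt : ∀ x, (∑ i, c i * φ i x) < φ0 x → fstar x = 1)
    (hlt : ∀ x, φ0 x < (∑ i, c i * φ i x) → fstar x = 0)
    (heq : ∀ i, ∫ x, fstar x * φ i x ∂ν = t i) :
    ∀ f : X → ℝ, Measurable f → (∀ x, 0 ≤ f x) → (∀ x, f x ≤ 1) →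
      (∀ i, ∫ x, f x * φ i x ∂ν = t i) →
      ∫ x, f x * φ0 x ∂ν ≤ ∫ x, fstar x * φ0 x ∂ν := by
  intro f hfm' hf0' hf1' hfeq
  have hΦ : Integrable (fun x => φ0 x - ∑ i, c i * φ i x) ν :=
    hφ0.sub (integrable_finsetSum _ fun i _ => (hφ i).const_mul (c i))
  have key : ∫ x, f x * (φ0 x - ∑ i, c i * φ i x) ∂ν
      ≤ ∫ x, fstar x * (φ0 x - ∑ i, c i * φ i x) ∂ν :=
    integral_mono (hΦ.unitInterval_mul hfm' hf0' hf1') (hΦ.unitInterval_mul hfm hf0 hf1)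
      fun x => mul_le_mul_of_threshold (fun h => hgt x (sub_pos.mp h))
        (fun h => hlt x (sub_neg.mp h)) (hf0' x) (hf1' x)
  rw [integral_mul_sub_sum c (hφ0.unitInterval_mul hfm' hf0' hf1')
      fun i => (hφ i).unitInterval_mul hfm' hf0' hf1',
    integral_mul_sub_sum c (hφ0.unitInterval_mul hfm hf0 hf1)
      fun i => (hφ i).unitInterval_mul hfm hf0 hf1] at key
  simp only [heq, hfeq] at key
  linarith

theorem stmt_2 {X : Type*} [MeasurableSpace X] (ν : Measure X) [SigmaFinite ν]
    (m : ℕ) (φ0 : X → ℝ) (φ : Fin m → X → ℝ)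
    (hφ0 : Integrable φ0 ν) (hφ : ∀ i, Integrable (φ i) ν)
    (c t : Fin m → ℝ)
    (fstar : X → ℝ) (hfm : Measurable fstar)
    (hf0 : ∀ x, 0 ≤ fstar x) (hf1 : ∀ x, fstar x ≤ 1)
    (hgt : ∀ x, (∑ i, c i * φ i x) < φ0 x → fstar x = 1)
    (hlt : ∀ x, φ0 x < (∑ i, c i * φ i x) → fstar x = 0)
    (heq : ∀ i, ∫ x, fstar x * φ i x ∂ν = t i) :
    ∀ f : X → ℝ, Measurable f → (∀ x, 0 ≤ f x) → (∀ x, f x ≤ 1) →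
      (∀ i, ∫ x, f x * φ i x ∂ν = t i) →
      ∫ x, f x * φ0 x ∂ν ≤ ∫ x, fstar x * φ0 x ∂ν :=
  stmt_2_general ν m φ0 φ hφ0 hφ c t fstar hfm hf0 hf1 hgt hlt heq
end

section
/- With the same setting, the predictive-equality difference DPE(f) = P(Ŷ_f=1 | A=1, Y=0) − P(Ŷ_f=1 | A=0, Y=0) of any randomized classifier f equals ∫ f(x,a) · ((2a−1)(1−η_a(x))/(p_a (1−p_{Y,a}))) dP_{X,A}(x,a). -/
open MeasureTheory Set

/-!
Both sides are computed fiber by fiber over `A`. On the left, `P_{X|A=a,Y=0}` has density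
`(1 - η_a) / (1 - p_{Y,a})` with respect to `P_{X|A=a}`. On the right, the bounded integrand is split
over the two fibers `{A = a}` of `P_{X,A}`, each of which is `p_a • P_{X|A=a}`; the factor `p_a`
cancels the `1 / p_a` in the integrand.
-/

theorem abs_mul_mul_div_le_one_div {t s e d : ℝ} (ht : |t| ≤ 1) (hs : |s| = 1) (he : |e| ≤ 1)
    (hd : 0 < d) : |t * (s * e / d)| ≤ 1 / d := by
  rw [abs_mul, abs_div, abs_mul, hs, one_mul, abs_of_pos hd, ← mul_div_assoc]
  exact div_le_div_of_nonneg_right (mul_le_one₀ ht (abs_nonneg e) he) hd.le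

section

variable {X E : Type*} [MeasurableSpace X] [NormedAddCommGroup E] [NormedSpace ℝ E]

theorem integral_withDensity_ofReal_eq_integral_smul {ν : Measure X} {w : X → ℝ}
    (hw : Measurable w) (hw0 : 0 ≤ᵐ[ν] w) (h : X → E) :
    ∫ x, h x ∂ν.withDensity (fun x => ENNReal.ofReal (w x)) = ∫ x, w x • h x ∂ν := by
  rw [integral_withDensity_eq_integral_toReal_smul hw.ennreal_ofReal
    (ae_of_all _ fun _ => ENNReal.ofReal_lt_top)]
  refine integral_congr_ae (hw0.mono fun x hx => ?_)
  simp only [ENNReal.toReal_ofReal hx]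

variable {α : Type*} [MeasurableSpace α] [MeasurableSingletonClass α] [Fintype α]

theorem integral_eq_sum_setIntegral_snd {μ : Measure (X × α)} {k : X × α → E}
    (hk : Integrable k μ) :
    ∫ q, k q ∂μ = ∑ a, ∫ q in {q | q.2 = a}, k (q.1, a) ∂μ := by
  have hfib : ∀ a : α, MeasurableSet {q : X × α | q.2 = a} :=
    fun a => measurable_snd (measurableSet_singleton a)
  have hcover : (⋃ a : α, {q : X × α | q.2 = a}) = univ := by
    ext q; simp
  rw [← setIntegral_univ, ← hcover, integral_iUnion_fintype hfib
    (fun a b hab => disjoint_left.mpr fun q ha hb => hab (ha.symm.trans hb))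
    (fun a => hk.integrableOn)]
  refine Finset.sum_congr rfl fun a _ => setIntegral_congr_fun (hfib a) fun q hq => ?_
  obtain rfl : q.2 = a := hq
  rfl

theorem integral_eq_sum_of_disintegration {μ : Measure (X × α)} [IsFiniteMeasure μ]
    {ν : α → Measure X} [∀ a, IsFiniteMeasure (ν a)] {p : α → ℝ}
    (hdis : ∀ (a : α) (g : X → ℝ), Measurable g → Integrable g (ν a) →
      ∫ q in {q : X × α | q.2 = a}, g q.1 ∂μ = p a * ∫ x, g x ∂(ν a))
    {k : X × α → ℝ} (hk : Measurable k) {C : α → ℝ} (hkC : ∀ a x, |k (x, a)| ≤ C a) :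
    ∫ q, k q ∂μ = ∑ a, p a * ∫ x, k (x, a) ∂(ν a) := by
  have hkμ : Integrable k μ := by
    refine .of_bound hk.aestronglyMeasurable (∑ a, |C a|) (ae_of_all _ fun q => ?_)
    calc ‖k q‖ = |k (q.1, q.2)| := rfl
      _ ≤ |C q.2| := (hkC q.2 q.1).trans (le_abs_self _)
      _ ≤ ∑ a, |C a| := Finset.single_le_sum (fun a _ => abs_nonneg (C a)) (Finset.mem_univ _)
  rw [integral_eq_sum_setIntegral_snd hkμ]
  refine Finset.sum_congr rfl fun a _ => hdis a _ (hk.comp measurable_prodMk_right) ?_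
  exact .of_bound (hk.comp measurable_prodMk_right).aestronglyMeasurable (C a)
    (ae_of_all _ (hkC a))

end

theorem stmt_6_general {X : Type*} [MeasurableSpace X]
    (μ : Measure (X × Bool)) [IsProbabilityMeasure μ]
    (ν : Bool → Measure X) (hνp : ∀ a, IsProbabilityMeasure (ν a))
    (νY0 : Bool → Measure X)
    (η : Bool → X → ℝ) (hη : ∀ a, Measurable (η a))
    (hη0 : ∀ a x, 0 ≤ η a x) (hη1 : ∀ a x, η a x ≤ 1)
    (p pY : Bool → ℝ) (hp : ∀ a, 0 < p a) (hpY1 : ∀ a, pY a < 1)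
    (hlink : ∀ (a : Bool) (g : X → ℝ), Measurable g → Integrable g (ν a) →
      ∫ q in {q : X × Bool | q.2 = a}, g q.1 ∂μ = p a * ∫ x, g x ∂(ν a))
    (hRN : ∀ a, νY0 a = (ν a).withDensity (fun x => ENNReal.ofReal ((1 - η a x) / (1 - pY a))))
    (f : X × Bool → ℝ) (hf : Measurable f) (hf0 : ∀ q, 0 ≤ f q) (hf1 : ∀ q, f q ≤ 1) :
    (∫ x, f (x, true) ∂(νY0 true)) - (∫ x, f (x, false) ∂(νY0 false)) =
      ∫ q, f q * ((if q.2 then (1:ℝ) else -1) * (1 - η q.2 q.1) / (p q.2 * (1 - pY q.2))) ∂μ := by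
  have hpY : ∀ a, 0 < 1 - pY a := fun a => sub_pos.mpr (hpY1 a)
  have hLHS : ∀ a, ∫ x, f (x, a) ∂(νY0 a) =
      ∫ x, (1 - η a x) / (1 - pY a) * f (x, a) ∂(ν a) := fun a => by
    rw [hRN a, integral_withDensity_ofReal_eq_integral_smul (by fun_prop)
      (ae_of_all _ fun x => div_nonneg (sub_nonneg.mpr (hη1 a x)) (hpY a).le)]
    rfl
  have hmeas : Measurable fun q : X × Bool =>
      f q * ((if q.2 then (1:ℝ) else -1) * (1 - η q.2 q.1) / (p q.2 * (1 - pY q.2))) :=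
    hf.mul <| measurable_from_prod_countable_left fun a =>
      show Measurable fun x => (if a then (1:ℝ) else -1) * (1 - η a x) / (p a * (1 - pY a)) from
        (((hη a).const_sub 1).const_mul _).div_const _
  have hbound : ∀ a x, |f (x, a) * ((if a then (1:ℝ) else -1) * (1 - η a x) / (p a * (1 - pY a)))|
      ≤ 1 / (p a * (1 - pY a)) := fun a x =>
    abs_mul_mul_div_le_one_div (abs_le.mpr ⟨by linarith [hf0 (x, a)], hf1 (x, a)⟩)
      (by cases a <;> simp) (abs_le.mpr ⟨by linarith [hη1 a x], by linarith [hη0 a x]⟩)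
      (mul_pos (hp a) (hpY a))
  rw [integral_eq_sum_of_disintegration hlink hmeas hbound, Fintype.sum_bool, hLHS, hLHS]
  have hfiber : ∀ a, p a * ∫ x, f (x, a) *
      ((if a then (1:ℝ) else -1) * (1 - η a x) / (p a * (1 - pY a))) ∂(ν a) =
      (if a then (1:ℝ) else -1) * ∫ x, (1 - η a x) / (1 - pY a) * f (x, a) ∂(ν a) := fun a => by
    rw [← integral_const_mul, ← integral_const_mul]
    congr 1 with x
    field_simp [(hp a).ne', (hpY a).ne']
  rw [hfiber, hfiber]
  simp only [if_true, Bool.false_eq_true, if_false]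
  ring

theorem stmt_6 {X : Type*} [MeasurableSpace X]
    (μ : Measure (X × Bool)) [IsProbabilityMeasure μ]
    (ν : Bool → Measure X) (hνp : ∀ a, IsProbabilityMeasure (ν a))
    (νY0 : Bool → Measure X)
    (η : Bool → X → ℝ) (hη : ∀ a, Measurable (η a))
    (hη0 : ∀ a x, 0 ≤ η a x) (hη1 : ∀ a x, η a x ≤ 1)
    (p pY : Bool → ℝ) (hp : ∀ a, 0 < p a) (hpY0 : ∀ a, 0 < pY a) (hpY1 : ∀ a, pY a < 1)
    (hpdef : ∀ a, p a = (μ {q : X × Bool | q.2 = a}).toReal)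
    (hpYdef : ∀ a, ∫ x, η a x ∂(ν a) = pY a)
    (hlink : ∀ (a : Bool) (g : X → ℝ), Measurable g → Integrable g (ν a) →
      ∫ q in {q : X × Bool | q.2 = a}, g q.1 ∂μ = p a * ∫ x, g x ∂(ν a))
    (hRN : ∀ a, νY0 a = (ν a).withDensity (fun x => ENNReal.ofReal ((1 - η a x) / (1 - pY a))))
    (f : X × Bool → ℝ) (hf : Measurable f) (hf0 : ∀ q, 0 ≤ f q) (hf1 : ∀ q, f q ≤ 1) :
    (∫ x, f (x, true) ∂(νY0 true)) - (∫ x, f (x, false) ∂(νY0 false)) =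
      ∫ q, f q * ((if q.2 then (1:ℝ) else -1) * (1 - η q.2 q.1) / (p q.2 * (1 - pY q.2))) ∂μ :=
  stmt_6_general μ ν hνp νY0 η hη hη0 hη1 p pY hp hpY1 hlink hRN f hf hf0 hf1
end

section
/- With the same setting, the overall-accuracy-equality difference DOA(f) = [P(Ŷ_f=1|A=1,Y=1) + P(Ŷ_f=0|A=1,Y=0)] − [P(Ŷ_f=1|A=0,Y=1) + P(Ŷ_f=0|A=0,Y=0)] of a randomized classifier f equals ∫ f(x,a) · ((2a−1)/p_a) · (η_a(x)/p_{Y,a} − (1−η_a(x))/(1−p_{Y,a})) dP_{X,A}(x,a). -/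
/-!
Both sides split along the two groups. Inside group `a`, the class-conditional laws are
`ν a` reweighted by `η / pY` and `(1 - η) / (1 - pY)`; since the second density integrates
to `1`, the accuracy `∫ f dνY1 + ∫ (1 - f) dνY0` equals `1 + ∫ f w dν` with
`w = η / pY - (1 - η) / (1 - pY)`, and the constants `1` cancel in the difference. On the
other side, the restriction of `μ` to `{A = a}` acts on functions of `x` as `p a • ν a`,
which cancels the factor `1 / p a`.
-/

open MeasureTheory

theorem abs_div_le_inv_abs {t : ℝ} (ht : |t| ≤ 1) (π : ℝ) : |t / π| ≤ |π|⁻¹ := by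
  rw [abs_div, div_eq_mul_inv]
  exact mul_le_of_le_one_left (inv_nonneg.2 (abs_nonneg π)) ht

theorem abs_div_sub_div_one_sub_le {t : ℝ} (ht0 : 0 ≤ t) (ht1 : t ≤ 1) (π : ℝ) :
    |t / π - (1 - t) / (1 - π)| ≤ |π|⁻¹ + |1 - π|⁻¹ :=
  (abs_sub _ _).trans <| add_le_add
    (abs_div_le_inv_abs (abs_le.2 ⟨by linarith, ht1⟩) π)
    (abs_div_le_inv_abs (abs_le.2 ⟨by linarith, by linarith⟩) (1 - π))

section Integrals

variable {X : Type*} [MeasurableSpace X]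

theorem integral_withDensity_ofReal {ν : Measure X} {d : X → ℝ} (hd : Measurable d)
    (hd0 : ∀ x, 0 ≤ d x) (g : X → ℝ) :
    ∫ x, g x ∂(ν.withDensity fun x => ENNReal.ofReal (d x)) = ∫ x, d x * g x ∂ν := by
  rw [integral_withDensity_eq_integral_toReal_smul hd.ennreal_ofReal
    (ae_of_all _ fun _ => ENNReal.ofReal_lt_top)]
  simp only [ENNReal.toReal_ofReal (hd0 _), smul_eq_mul]

theorem integral_withDensity_add_integral_one_sub_withDensity {ν : Measure X}
    [IsProbabilityMeasure ν] {η : X → ℝ} (hη : Measurable η) (hη0 : ∀ x, 0 ≤ η x)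
    (hη1 : ∀ x, η x ≤ 1) {π : ℝ} (hπ1 : π < 1) (hηπ : ∫ x, η x ∂ν = π)
    {g : X → ℝ} (hg : Integrable g ν) :
    ∫ x, g x ∂(ν.withDensity fun x => ENNReal.ofReal (η x / π)) +
        ∫ x, (1 - g x) ∂(ν.withDensity fun x => ENNReal.ofReal ((1 - η x) / (1 - π))) =
      1 + ∫ x, g x * (η x / π - (1 - η x) / (1 - π)) ∂ν := by
  have hπ0 : 0 ≤ π := hηπ ▸ integral_nonneg hη0
  have hη' : ∀ x, |η x| ≤ 1 := fun x => abs_le.2 ⟨by linarith [hη0 x], hη1 x⟩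
  have hη'' : ∀ x, |1 - η x| ≤ 1 := fun x => abs_le.2 ⟨by linarith [hη1 x], by linarith [hη0 x]⟩
  have hdens1 : Measurable fun x => η x / π := hη.div_const π
  have hdens0 : Measurable fun x => (1 - η x) / (1 - π) := (measurable_const.sub hη).div_const _
  rw [integral_withDensity_ofReal hdens1 fun x => div_nonneg (hη0 x) hπ0,
    integral_withDensity_ofReal hdens0 fun x => div_nonneg (sub_nonneg.2 (hη1 x)) (by linarith)]
  have hηi : Integrable η ν :=
    .of_bound hη.aestronglyMeasurable 1 (ae_of_all _ hη')
  have hdens0_int : Integrable (fun x => (1 - η x) / (1 - π)) ν :=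
    ((integrable_const 1).sub hηi).div_const _
  have hdens0_one : ∫ x, (1 - η x) / (1 - π) ∂ν = 1 := by
    rw [integral_div, integral_sub (integrable_const 1) hηi, hηπ]
    simp [div_self (sub_pos.2 hπ1).ne']
  have hI1 : Integrable (fun x => η x / π * g x) ν :=
    hg.bdd_mul hdens1.aestronglyMeasurable (ae_of_all _ fun x => abs_div_le_inv_abs (hη' x) π)
  have hI0 : Integrable (fun x => (1 - η x) / (1 - π) * (1 - g x)) ν :=
    ((integrable_const 1).sub hg).bdd_mul hdens0.aestronglyMeasurable
      (ae_of_all _ fun x => abs_div_le_inv_abs (hη'' x) (1 - π))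
  have hIw : Integrable (fun x => g x * (η x / π - (1 - η x) / (1 - π))) ν :=
    hg.mul_bdd (hdens1.sub hdens0).aestronglyMeasurable
      (ae_of_all _ fun x => abs_div_sub_div_one_sub_le (hη0 x) (hη1 x) π)
  calc ∫ x, η x / π * g x ∂ν + ∫ x, (1 - η x) / (1 - π) * (1 - g x) ∂ν
      = ∫ x, ((1 - η x) / (1 - π) + g x * (η x / π - (1 - η x) / (1 - π))) ∂ν := by
        rw [← integral_add hI1 hI0]
        congr 1 with x
        ring
    _ = 1 + ∫ x, g x * (η x / π - (1 - η x) / (1 - π)) ∂ν := by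
        rw [integral_add hdens0_int hIw, hdens0_one]

theorem integrable_prod_of_slices_bound {β : Type*} [MeasurableSpace β] [Finite β]
    [MeasurableSingletonClass β] {μ : Measure (X × β)} [IsFiniteMeasure μ] {F : X × β → ℝ}
    (hF : ∀ b, Measurable fun x => F (x, b)) {B : β → ℝ} (hB : ∀ b x, |F (x, b)| ≤ B b) :
    Integrable F μ :=
  .of_bound (measurable_from_prod_countable_left hF).aestronglyMeasurable (⨆ b, B b)
    (ae_of_all _ fun q => (hB q.2 q.1).trans (le_ciSup (Finite.bddAbove_range B) q.2))

theorem integral_prod_bool_eq_of_setIntegral_eq {μ : Measure (X × Bool)} [IsFiniteMeasure μ]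
    {ν : Bool → Measure X} [∀ a, IsFiniteMeasure (ν a)] {c : Bool → ℝ}
    (hlink : ∀ (a : Bool) (g : X → ℝ), Measurable g → Integrable g (ν a) →
      ∫ q in {q : X × Bool | q.2 = a}, g q.1 ∂μ = c a * ∫ x, g x ∂(ν a))
    {F : X × Bool → ℝ} (hF : ∀ a, Measurable fun x => F (x, a)) {B : Bool → ℝ}
    (hB : ∀ a x, |F (x, a)| ≤ B a) :
    ∫ q, F q ∂μ =
      c true * ∫ x, F (x, true) ∂(ν true) + c false * ∫ x, F (x, false) ∂(ν false) := by
  have hslice : ∀ a, ∫ q in {q : X × Bool | q.2 = a}, F q ∂μ = c a * ∫ x, F (x, a) ∂(ν a) := by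
    intro a
    rw [← hlink a _ (hF a) (.of_bound (hF a).aestronglyMeasurable (B a) (ae_of_all _ (hB a)))]
    refine setIntegral_congr_fun (measurable_snd (measurableSet_singleton a)) ?_
    rintro ⟨x, b⟩ (rfl : b = a)
    rfl
  have hcompl : {q : X × Bool | q.2 = true}ᶜ = {q : X × Bool | q.2 = false} := by
    ext q
    simp
  rw [← hslice, ← hslice, ← hcompl]
  exact (integral_add_compl (measurable_snd (measurableSet_singleton _))
    (integrable_prod_of_slices_bound hF hB)).symm

end Integrals

theorem stmt_7_general {X : Type*} [MeasurableSpace X]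
    (μ : Measure (X × Bool)) [IsProbabilityMeasure μ]
    (ν : Bool → Measure X) (hνp : ∀ a, IsProbabilityMeasure (ν a))
    (νY1 νY0 : Bool → Measure X)
    (η : Bool → X → ℝ) (hη : ∀ a, Measurable (η a))
    (hη0 : ∀ a x, 0 ≤ η a x) (hη1 : ∀ a x, η a x ≤ 1)
    (p pY : Bool → ℝ) (hp : ∀ a, 0 < p a) (hpY1 : ∀ a, pY a < 1)
    (hpYdef : ∀ a, ∫ x, η a x ∂(ν a) = pY a)
    (hlink : ∀ (a : Bool) (g : X → ℝ), Measurable g → Integrable g (ν a) →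
      ∫ q in {q : X × Bool | q.2 = a}, g q.1 ∂μ = p a * ∫ x, g x ∂(ν a))
    (hRN1 : ∀ a, νY1 a = (ν a).withDensity (fun x => ENNReal.ofReal (η a x / pY a)))
    (hRN0 : ∀ a, νY0 a = (ν a).withDensity (fun x => ENNReal.ofReal ((1 - η a x) / (1 - pY a))))
    (f : X × Bool → ℝ) (hf : Measurable f) (hf0 : ∀ q, 0 ≤ f q) (hf1 : ∀ q, f q ≤ 1) :
    ((∫ x, f (x, true) ∂(νY1 true)) + (∫ x, (1 - f (x, true)) ∂(νY0 true))) -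
      ((∫ x, f (x, false) ∂(νY1 false)) + (∫ x, (1 - f (x, false)) ∂(νY0 false))) =
      ∫ q, f q * ((if q.2 then (1:ℝ) else -1) / p q.2) *
        (η q.2 q.1 / pY q.2 - (1 - η q.2 q.1) / (1 - pY q.2)) ∂μ := by
  have := hνp
  have hfa : ∀ a, Measurable fun x => f (x, a) := fun a => hf.comp measurable_prodMk_right
  have hw : ∀ a, Measurable fun x => η a x / pY a - (1 - η a x) / (1 - pY a) := fun a => by
    have := hη a
    fun_prop
  have hfb : ∀ q, |f q| ≤ 1 := fun q => abs_le.2 ⟨by linarith [hf0 q], hf1 q⟩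
  have hacc : ∀ a, ∫ x, f (x, a) ∂(νY1 a) + ∫ x, (1 - f (x, a)) ∂(νY0 a) =
      1 + ∫ x, f (x, a) * (η a x / pY a - (1 - η a x) / (1 - pY a)) ∂(ν a) := fun a => by
    rw [hRN1, hRN0]
    exact integral_withDensity_add_integral_one_sub_withDensity (hη a) (hη0 a) (hη1 a) (hpY1 a)
      (hpYdef a) (.of_bound (hfa a).aestronglyMeasurable 1 (ae_of_all _ fun x => hfb _))
  have hsign : ∀ a : Bool, |(if a then (1:ℝ) else -1) / p a| = |p a|⁻¹ := by
    intro a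
    cases a <;> simp [abs_div]
  have hbound : ∀ a x, |f (x, a) * ((if a then (1:ℝ) else -1) / p a) *
      (η a x / pY a - (1 - η a x) / (1 - pY a))| ≤ |p a|⁻¹ * (|pY a|⁻¹ + |1 - pY a|⁻¹) := by
    intro a x
    rw [abs_mul, abs_mul, hsign, mul_comm |f (x, a)|, mul_assoc]
    gcongr
    exact mul_le_of_le_one_left (abs_nonneg _) (hfb _) |>.trans
      (abs_div_sub_div_one_sub_le (hη0 a x) (hη1 a x) _)
  rw [integral_prod_bool_eq_of_setIntegral_eq hlink
    (fun a => ((hfa a).mul_const ((if a then 1 else -1) / p a)).fun_mul (hw a)) hbound, hacc, hacc]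
  dsimp only
  simp only [↓reduceIte, Bool.false_eq_true, mul_right_comm (f _) _ (_ - _), integral_mul_const]
  field_simp [(hp true).ne', (hp false).ne']
  ring

theorem stmt_7 {X : Type*} [MeasurableSpace X]
    (μ : Measure (X × Bool)) [IsProbabilityMeasure μ]
    (ν : Bool → Measure X) (hνp : ∀ a, IsProbabilityMeasure (ν a))
    (νY1 νY0 : Bool → Measure X)
    (η : Bool → X → ℝ) (hη : ∀ a, Measurable (η a))
    (hη0 : ∀ a x, 0 ≤ η a x) (hη1 : ∀ a x, η a x ≤ 1)
    (p pY : Bool → ℝ) (hp : ∀ a, 0 < p a) (hpY0 : ∀ a, 0 < pY a) (hpY1 : ∀ a, pY a < 1)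
    (hpdef : ∀ a, p a = (μ {q : X × Bool | q.2 = a}).toReal)
    (hpYdef : ∀ a, ∫ x, η a x ∂(ν a) = pY a)
    (hlink : ∀ (a : Bool) (g : X → ℝ), Measurable g → Integrable g (ν a) →
      ∫ q in {q : X × Bool | q.2 = a}, g q.1 ∂μ = p a * ∫ x, g x ∂(ν a))
    (hRN1 : ∀ a, νY1 a = (ν a).withDensity (fun x => ENNReal.ofReal (η a x / pY a)))
    (hRN0 : ∀ a, νY0 a = (ν a).withDensity (fun x => ENNReal.ofReal ((1 - η a x) / (1 - pY a))))
    (f : X × Bool → ℝ) (hf : Measurable f) (hf0 : ∀ q, 0 ≤ f q) (hf1 : ∀ q, f q ≤ 1) :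
    ((∫ x, f (x, true) ∂(νY1 true)) + (∫ x, (1 - f (x, true)) ∂(νY0 true))) -
      ((∫ x, f (x, false) ∂(νY1 false)) + (∫ x, (1 - f (x, false)) ∂(νY0 false))) =
      ∫ q, f q * ((if q.2 then (1:ℝ) else -1) / p q.2) *
        (η q.2 q.1 / pY q.2 - (1 - η q.2 q.1) / (1 - pY q.2)) ∂μ :=
  stmt_7_general μ ν hνp νY1 νY0 η hη hη0 hη1 p pY hp hpY1 hpYdef hlink hRN1 hRN0 f hf hf0 hf1
end

section
/- Existence of balanced group thresholds: Let a range over a finite set 𝒜 of size at least 2, let p_a > 0 for each a, and suppose that for each a ∈ 𝒜 the random variable η_a(X) (under P_{X|A=a}) has an atomless distribution. Then there exist real numbers (t_a)_{a∈𝒜} with Σ_{a∈𝒜} t_a = 0 such that the probabilities P_{X|A=a}(η_a(X) > 1/2 + t_a/(2p_a)) are equal for all a ∈ 𝒜. -/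
/-!
Push each `η a` forward to a law `μ a` on `[0, 1]`; its distribution function `G a` is continuous
because `μ a` has no atoms. The pairs `(r, c)` with `G a (c a) = r` for all `a` form a compact set
whose fibre over each level `r ∈ [0, 1]` is a nonempty box of intervals. The levels over which
`∑ a, 2 p a (c a - 1/2)` can be made `≤ 0`, resp. `≥ 0`, are closed and cover `[0, 1]`, so by
connectedness they share a level, and on the connected box over it the sum vanishes somewhere.
The thresholds `1/2 + t a / (2 p a)` are then exactly the `c a`.
-/

open MeasureTheory Set ProbabilityTheory

namespace ProbabilityTheory

theorem continuous_cdf (μ : Measure ℝ) [IsProbabilityMeasure μ] [NullSingletonClass μ] :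
    Continuous (cdf μ) := by
  refine continuous_iff_continuousAt.2 fun x => ?_
  have hleft : Function.leftLim (cdf μ) x = cdf μ x := by
    have hjump := (cdf μ).measure_singleton x
    rw [measure_cdf, measure_singleton, eq_comm, ENNReal.ofReal_eq_zero, sub_nonpos] at hjump
    exact le_antisymm ((monotone_cdf μ).leftLim_le le_rfl) hjump
  rw [(monotone_cdf μ).continuousAt_iff_leftLim_eq_rightLim, hleft, (cdf μ).rightLim_eq]

theorem measure_Ioi_eq_of_cdf_eq {μ μ' : Measure ℝ} [IsProbabilityMeasure μ]
    [IsProbabilityMeasure μ'] {x y : ℝ} (h : cdf μ x = cdf μ' y) : μ (Ioi x) = μ' (Ioi y) := by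
  rw [← compl_Iic, ← compl_Iic, prob_compl_eq_one_sub measurableSet_Iic,
    prob_compl_eq_one_sub measurableSet_Iic, ← ofReal_cdf, ← ofReal_cdf, h]

theorem cdf_eq_zero_of_measure_Iio_eq_zero (μ : Measure ℝ) [IsProbabilityMeasure μ]
    [NullSingletonClass μ] {x : ℝ} (h : μ (Iio x) = 0) : cdf μ x = 0 := by
  rw [cdf_eq_real, measureReal_def, ← measure_congr Iio_ae_eq_Iic, h, ENNReal.toReal_zero]

theorem cdf_eq_one_of_measure_Ioi_eq_zero (μ : Measure ℝ) [IsProbabilityMeasure μ]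
    {x : ℝ} (h : μ (Ioi x) = 0) : cdf μ x = 1 := by
  rw [cdf_eq_real, measureReal_def,
    (prob_compl_eq_zero_iff measurableSet_Iic).1 (by rwa [compl_Iic]), ENNReal.toReal_one]

end ProbabilityTheory

theorem IsPreconnected.exists_fiber_intermediate_value {X E α : Type*} [TopologicalSpace X]
    [T2Space X] [TopologicalSpace E] [LinearOrder α] [TopologicalSpace α] [OrderClosedTopology α]
    {S : Set X} (hS : IsPreconnected S) {K : Set (X × E)} (hK : IsCompact K)
    (hfiber : ∀ x ∈ S, IsPreconnected (Prod.mk x ⁻¹' K) ∧ (Prod.mk x ⁻¹' K).Nonempty)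
    {φ : E → α} (hφ : Continuous φ) {v : α} {x₀ x₁ : X} {e₀ e₁ : E}
    (hx₀ : x₀ ∈ S) (hx₁ : x₁ ∈ S) (he₀ : (x₀, e₀) ∈ K) (he₁ : (x₁, e₁) ∈ K)
    (h₀ : φ e₀ ≤ v) (h₁ : v ≤ φ e₁) :
    ∃ x ∈ S, ∃ e, (x, e) ∈ K ∧ φ e = v := by
  have hclosed : ∀ T : Set α, IsClosed T → IsClosed (Prod.fst '' (K ∩ {p | φ p.2 ∈ T})) :=
    fun T hT => ((hK.inter_right (hT.preimage (hφ.comp continuous_snd))).image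
      continuous_fst).isClosed
  have hcover : S ⊆ Prod.fst '' (K ∩ {p | φ p.2 ∈ Iic v}) ∪
      Prod.fst '' (K ∩ {p | φ p.2 ∈ Ici v}) := by
    intro x hx
    obtain ⟨e, he⟩ := (hfiber x hx).2
    rcases le_total (φ e) v with h | h
    · exact Or.inl ⟨(x, e), ⟨he, h⟩, rfl⟩
    · exact Or.inr ⟨(x, e), ⟨he, h⟩, rfl⟩
  obtain ⟨x, hxS, ⟨⟨x, e⟩, ⟨he, hle⟩, rfl⟩, ⟨⟨x, e'⟩, ⟨he', hge⟩, rfl⟩⟩ :=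
    isPreconnected_closed_iff.1 hS _ _ (hclosed _ isClosed_Iic) (hclosed _ isClosed_Ici) hcover
      ⟨x₀, hx₀, (x₀, e₀), ⟨he₀, h₀⟩, rfl⟩ ⟨x₁, hx₁, (x₁, e₁), ⟨he₁, h₁⟩, rfl⟩
  obtain ⟨e'', he'', hv⟩ := (hfiber _ hxS).1.intermediate_value he he' hφ.continuousOn ⟨hle, hge⟩
  exact ⟨_, hxS, e'', he'', hv⟩

theorem exists_common_level_of_monotone_continuous {ι : Type*} [Fintype ι] {G : ι → ℝ → ℝ}
    (hmono : ∀ i, Monotone (G i)) (hcont : ∀ i, Continuous (G i))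
    (h0 : ∀ i, G i 0 = 0) (h1 : ∀ i, G i 1 = 1)
    {φ : (ι → ℝ) → ℝ} (hφ : Continuous φ) {v : ℝ} (hv : v ∈ Icc (φ 0) (φ 1)) :
    ∃ c : ι → ℝ, (∀ i j, G i (c i) = G j (c j)) ∧ φ c = v := by
  set K : Set (ℝ × (ι → ℝ)) := {p | p.1 ∈ Icc 0 1 ∧ ∀ i, p.2 i ∈ Icc 0 1 ∧ G i (p.2 i) = p.1}
  have hK : IsCompact K := by
    refine (isCompact_Icc.prod (isCompact_univ_pi fun _ => isCompact_Icc)).of_isClosed_subset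
      ?_ fun p hp => ⟨hp.1, fun i _ => (hp.2 i).1⟩
    simp only [K, ofPred_and, ofPred_forall]
    exact (isClosed_Icc.preimage continuous_fst).inter (isClosed_iInter fun i =>
      ((isClosed_Icc.preimage (by fun_prop)).inter (isClosed_eq (by fun_prop) continuous_fst)))
  have hfiber : ∀ r ∈ Icc (0 : ℝ) 1,
      Prod.mk r ⁻¹' K = univ.pi fun i => Icc 0 1 ∩ G i ⁻¹' {r} := by
    intro r hr
    ext c
    simp [K, hr.1, hr.2]
  have hfiber_box : ∀ r ∈ Icc (0 : ℝ) 1,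
      IsPreconnected (Prod.mk r ⁻¹' K) ∧ (Prod.mk r ⁻¹' K).Nonempty := by
    intro r hr
    rw [hfiber r hr]
    refine ⟨isPreconnected_univ_pi fun i => (ordConnected_Icc.inter
      (ordConnected_singleton.preimage_mono (hmono i))).isPreconnected,
      univ_pi_nonempty_iff.2 fun i => ?_⟩
    obtain ⟨c, hc, hGc⟩ := intermediate_value_Icc zero_le_one (hcont i).continuousOn
      (by rwa [h0, h1])
    exact ⟨c, hc, hGc⟩
  have h01 : (0 : ℝ) ∈ Icc (0 : ℝ) 1 ∧ (1 : ℝ) ∈ Icc (0 : ℝ) 1 :=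
    ⟨left_mem_Icc.2 zero_le_one, right_mem_Icc.2 zero_le_one⟩
  obtain ⟨r, -, c, hc, rfl⟩ := isPreconnected_Icc.exists_fiber_intermediate_value hK
    hfiber_box hφ h01.1 h01.2 (e₀ := 0) (e₁ := 1) ⟨h01.1, fun i => ⟨h01.1, h0 i⟩⟩
    ⟨h01.2, fun i => ⟨h01.2, h1 i⟩⟩ hv.1 hv.2
  exact ⟨c, fun i j => ((hc.2 i).2).trans ((hc.2 j).2).symm, rfl⟩

theorem stmt_9_general {X : Type*} [MeasurableSpace X] {𝒜 : Type*} [Fintype 𝒜]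
    (ν : 𝒜 → Measure X) [∀ a, IsProbabilityMeasure (ν a)]
    (η : 𝒜 → X → ℝ) (hη : ∀ a, Measurable (η a))
    (hη0 : ∀ a x, 0 ≤ η a x) (hη1 : ∀ a x, η a x ≤ 1)
    (p : 𝒜 → ℝ) (hp0 : ∀ a, 0 < p a)
    (hatomless : ∀ (a : 𝒜) (u : ℝ), ν a {x | η a x = u} = 0) :
    ∃ t : 𝒜 → ℝ, (∑ a, t a = 0) ∧
      ∀ a b : 𝒜, ν a {x | η a x > 1/2 + t a / (2 * p a)} =
        ν b {x | η b x > 1/2 + t b / (2 * p b)} := by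
  set μ : 𝒜 → Measure ℝ := fun a => (ν a).map (η a)
  have hμ : ∀ a s, MeasurableSet s → μ a s = ν a (η a ⁻¹' s) :=
    fun a _ hs => Measure.map_apply (hη a) hs
  have : ∀ a, IsProbabilityMeasure (μ a) :=
    fun a => Measure.isProbabilityMeasure_map (hη a).aemeasurable
  have : ∀ a, NullSingletonClass (μ a) :=
    fun a => ⟨fun u => (hμ a _ (measurableSet_singleton u)).trans (hatomless a u)⟩
  have hcdf0 : ∀ a, cdf (μ a) 0 = 0 := fun a => cdf_eq_zero_of_measure_Iio_eq_zero _ <| by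
    rw [hμ a _ measurableSet_Iio, ← measure_empty (μ := ν a)]
    exact congrArg _ (eq_empty_of_forall_notMem fun x hx => (hη0 a x).not_gt hx)
  have hcdf1 : ∀ a, cdf (μ a) 1 = 1 := fun a => cdf_eq_one_of_measure_Ioi_eq_zero _ <| by
    rw [hμ a _ measurableSet_Ioi, ← measure_empty (μ := ν a)]
    exact congrArg _ (eq_empty_of_forall_notMem fun x hx => (hη1 a x).not_gt hx)
  obtain ⟨c, hlevel, hsum⟩ := exists_common_level_of_monotone_continuous
    (fun a => monotone_cdf (μ a)) (fun a => continuous_cdf (μ a)) hcdf0 hcdf1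
    (φ := fun c => ∑ a, 2 * p a * (c a - 1 / 2)) (by fun_prop) (v := 0)
    ⟨Finset.sum_nonpos fun a _ => by rw [Pi.zero_apply]; linarith [hp0 a],
      Finset.sum_nonneg fun a _ => by rw [Pi.one_apply]; linarith [hp0 a]⟩
  refine ⟨fun a => 2 * p a * (c a - 1 / 2), hsum, fun a b => ?_⟩
  have hthreshold : ∀ a, 1 / 2 + 2 * p a * (c a - 1 / 2) / (2 * p a) = c a := fun a => by
    field_simp [(hp0 a).ne']
    ring
  simp only [hthreshold]
  exact (hμ a _ measurableSet_Ioi).symm.trans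
    ((measure_Ioi_eq_of_cdf_eq (hlevel a b)).trans (hμ b _ measurableSet_Ioi))

theorem stmt_9 {X : Type*} [MeasurableSpace X] {𝒜 : Type*} [Fintype 𝒜]
    (hcard : 2 ≤ Fintype.card 𝒜)
    (ν : 𝒜 → Measure X) [∀ a, IsProbabilityMeasure (ν a)]
    (η : 𝒜 → X → ℝ) (hη : ∀ a, Measurable (η a))
    (hη0 : ∀ a x, 0 ≤ η a x) (hη1 : ∀ a x, η a x ≤ 1)
    (p : 𝒜 → ℝ) (hp0 : ∀ a, 0 < p a) (hp1 : ∀ a, p a < 1) (hsum : ∑ a, p a = 1)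
    (hatomless : ∀ (a : 𝒜) (u : ℝ), ν a {x | η a x = u} = 0) :
    ∃ t : 𝒜 → ℝ, (∑ a, t a = 0) ∧
      ∀ a b : 𝒜, ν a {x | η a x > 1/2 + t a / (2 * p a)} =
        ν b {x | η b x > 1/2 + t b / (2 * p b)} :=
  stmt_9_general ν η hη hη0 hη1 p hp0 hatomless
end

section
/- Fair Bayes-optimal classifier under demographic parity (one-sided reduction): Let A ∈ {0,1}, Y ∈ {0,1}, with p_a = P(A=a) > 0 and η_a(x) = P(Y=1|A=a,X=x). Fix δ ≥ 0 and s ≥ 0, and let f_s(x,a) = 1{η_a(x) > 1/2 + (2a−1)s/(2p_a)} (with arbitrary randomization τ_a ∈ [0,1] on the boundary set {η_a(x) = 1/2 + (2a−1)s/(2p_a)}). If the resulting classifier f satisfies DDP(f) = δ exactly, then f minimizes the misclassification risk P(Ŷ ≠ Y) among all randomized classifiers g with DDP(g) ≤ δ. -/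
/-!
Writing `φ₀ q = 2 η_a(x) - 1` and `φ₁ q = (2a - 1) / p_a`, the risk of `g` is `P(Y = 1) - ∫ g φ₀`
and `DDP g = ∫ g φ₁`, so the claim asks `f` to maximise `∫ g φ₀` under `∫ g φ₁ ≤ ∫ f φ₁`.
The rule `f_s` is the threshold test `φ₀ > s φ₁`, hence `(g - f) (φ₀ - s φ₁) ≤ 0` pointwise, and
integrating gives `∫ (g - f) φ₀ ≤ s ∫ (g - f) φ₁ ≤ 0`: the generalized Neyman–Pearson lemma.
-/

open MeasureTheory Set

section NeymanPearson

variable {Ω : Type*} [MeasurableSpace Ω] {μ : Measure Ω}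

lemma sub_mul_sub_nonpos_of_threshold {φ₀ φ₁ s f g : ℝ}
    (hf_one : s * φ₁ < φ₀ → f = 1) (hf_zero : φ₀ < s * φ₁ → f = 0) (hg : g ∈ Icc (0 : ℝ) 1) :
    (g - f) * (φ₀ - s * φ₁) ≤ 0 := by
  rcases lt_trichotomy (s * φ₁) φ₀ with hlt | heq | hgt
  · rw [hf_one hlt]
    exact mul_nonpos_of_nonpos_of_nonneg (by linarith [hg.2]) (by linarith)
  · simp [heq]
  · rw [hf_zero hgt, sub_zero]
    exact mul_nonpos_of_nonneg_of_nonpos hg.1 (by linarith)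

lemma MeasureTheory.Integrable.mul_of_mem_Icc {φ g : Ω → ℝ} (hφ : Integrable φ μ)
    (hg : AEStronglyMeasurable g μ) (hg01 : ∀ ω, g ω ∈ Icc (0 : ℝ) 1) :
    Integrable (fun ω ↦ g ω * φ ω) μ :=
  hφ.bdd_mul hg (c := 1) <| .of_forall fun ω ↦ by
    rw [Real.norm_eq_abs, abs_of_nonneg (hg01 ω).1]; exact (hg01 ω).2

theorem integral_mul_le_of_threshold {φ₀ φ₁ f g : Ω → ℝ} {s : ℝ}
    (hφ₀ : Integrable φ₀ μ) (hφ₁ : Integrable φ₁ μ)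
    (hf : AEStronglyMeasurable f μ) (hg : AEStronglyMeasurable g μ)
    (hf01 : ∀ ω, f ω ∈ Icc (0 : ℝ) 1) (hg01 : ∀ ω, g ω ∈ Icc (0 : ℝ) 1)
    (hf_one : ∀ ω, s * φ₁ ω < φ₀ ω → f ω = 1) (hf_zero : ∀ ω, φ₀ ω < s * φ₁ ω → f ω = 0)
    (hs : 0 ≤ s) (hconstr : ∫ ω, g ω * φ₁ ω ∂μ ≤ ∫ ω, f ω * φ₁ ω ∂μ) :
    ∫ ω, g ω * φ₀ ω ∂μ ≤ ∫ ω, f ω * φ₀ ω ∂μ := by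
  have hgφ₀ := hφ₀.mul_of_mem_Icc hg hg01
  have hfφ₀ := hφ₀.mul_of_mem_Icc hf hf01
  have hgφ₁ := hφ₁.mul_of_mem_Icc hg hg01
  have hfφ₁ := hφ₁.mul_of_mem_Icc hf hf01
  have hlagrangian : ∫ ω, (g ω - f ω) * (φ₀ ω - s * φ₁ ω) ∂μ ≤ 0 :=
    integral_nonpos fun ω ↦ sub_mul_sub_nonpos_of_threshold (hf_one ω) (hf_zero ω) (hg01 ω)
  have hsplit : ∫ ω, (g ω - f ω) * (φ₀ ω - s * φ₁ ω) ∂μ =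
      (∫ ω, g ω * φ₀ ω ∂μ - ∫ ω, f ω * φ₀ ω ∂μ)
        - s * (∫ ω, g ω * φ₁ ω ∂μ - ∫ ω, f ω * φ₁ ω ∂μ) := by
    calc ∫ ω, (g ω - f ω) * (φ₀ ω - s * φ₁ ω) ∂μ
        = ∫ ω, ((g ω * φ₀ ω - f ω * φ₀ ω) - s * (g ω * φ₁ ω - f ω * φ₁ ω)) ∂μ := by
          congr 1 with ω; ring
      _ = _ := by
          rw [integral_sub, integral_const_mul, integral_sub hgφ₀ hfφ₀, integral_sub hgφ₁ hfφ₁]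
          exacts [hgφ₀.sub hfφ₀, (hgφ₁.sub hfφ₁).const_mul s]
  nlinarith

lemma integral_misclassification_eq [IsFiniteMeasure μ] {η g : Ω → ℝ} (hη : Integrable η μ)
    (hg : AEStronglyMeasurable g μ) (hg01 : ∀ ω, g ω ∈ Icc (0 : ℝ) 1) :
    ∫ ω, (g ω * (1 - η ω) + (1 - g ω) * η ω) ∂μ
      = ∫ ω, η ω ∂μ - ∫ ω, g ω * (2 * η ω - 1) ∂μ := by
  have hφ₀ : Integrable (fun ω ↦ g ω * (2 * η ω - 1)) μ :=
    ((hη.const_mul 2).sub (integrable_const 1)).mul_of_mem_Icc hg hg01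
  rw [← integral_sub hη hφ₀]
  congr 1 with ω
  ring

end NeymanPearson

theorem stmt_11_general {X : Type*} [MeasurableSpace X]
    (μ : Measure (X × Bool)) [IsProbabilityMeasure μ]
    (η : Bool → X → ℝ) (hη : ∀ a, Measurable (η a))
    (hη0 : ∀ a x, 0 ≤ η a x) (hη1 : ∀ a x, η a x ≤ 1)
    (p : Bool → ℝ)
    (risk DDP : (X × Bool → ℝ) → ℝ)
    (hrisk : ∀ g : X × Bool → ℝ,
      risk g = ∫ q, (g q * (1 - η q.2 q.1) + (1 - g q) * η q.2 q.1) ∂μ)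
    (hDDP : ∀ g : X × Bool → ℝ,
      DDP g = ∫ q, g q * ((if q.2 then (1:ℝ) else -1) / p q.2) ∂μ)
    (δ s : ℝ) (hs : 0 ≤ s)
    (τ : Bool → ℝ) (hτ0 : ∀ a, 0 ≤ τ a) (hτ1 : ∀ a, τ a ≤ 1)
    (f : X × Bool → ℝ) (hfm : Measurable f)
    (hfdef : ∀ (x : X) (a : Bool), f (x, a) =
      if η a x > 1/2 + (if a then (1:ℝ) else -1) * s / (2 * p a) then 1
      else if η a x = 1/2 + (if a then (1:ℝ) else -1) * s / (2 * p a) then τ a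
      else 0)
    (hfddp : DDP f = δ) :
    ∀ g : X × Bool → ℝ, Measurable g → (∀ q, 0 ≤ g q) → (∀ q, g q ≤ 1) →
      DDP g ≤ δ → risk f ≤ risk g := by
  intro g hg hg0 hg1 hgδ
  set c : Bool → ℝ := fun a ↦ (if a then (1:ℝ) else -1) / p a
  have hηint : Integrable (fun q : X × Bool ↦ η q.2 q.1) μ :=
    .of_bound (measurable_from_prod_countable_left fun a ↦ hη a).aestronglyMeasurable 1
      (.of_forall fun q ↦ by
        rw [Real.norm_eq_abs, abs_of_nonneg (hη0 _ _)]; exact hη1 _ _)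
  have hcint : Integrable (fun q : X × Bool ↦ c q.2) μ :=
    .of_bound ((measurable_of_finite c).comp measurable_snd).aestronglyMeasurable ‖c‖
      (.of_forall fun q ↦ norm_le_pi_norm c q.2)
  have hf01 : ∀ q, f q ∈ Icc (0 : ℝ) 1 := by
    rintro ⟨x, a⟩
    rw [hfdef]
    split_ifs <;> simp [hτ0 a, hτ1 a]
  have hg01 : ∀ q, g q ∈ Icc (0 : ℝ) 1 := fun q ↦ ⟨hg0 q, hg1 q⟩
  have hthreshold : ∀ (a : Bool), 1/2 + (if a then (1:ℝ) else -1) * s / (2 * p a)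
      = (1 + s * c a) / 2 := fun a ↦ by simp only [c]; ring
  rw [hrisk, hrisk, integral_misclassification_eq hηint hfm.aestronglyMeasurable hf01,
    integral_misclassification_eq hηint hg.aestronglyMeasurable hg01, sub_le_sub_iff_left]
  refine integral_mul_le_of_threshold ((hηint.const_mul 2).sub (integrable_const 1)) hcint
    hfm.aestronglyMeasurable hg.aestronglyMeasurable hf01 hg01 ?_ ?_ hs
    (by rw [← hDDP, ← hDDP, hfddp]; exact hgδ)
  · rintro ⟨x, a⟩ h
    rw [hfdef, hthreshold, if_pos (by dsimp only at h ⊢; linarith)]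
  · rintro ⟨x, a⟩ h
    rw [hfdef, hthreshold, if_neg (by dsimp only at h ⊢; linarith),
      if_neg (by dsimp only at h ⊢; linarith)]

theorem stmt_11 {X : Type*} [MeasurableSpace X]
    (μ : Measure (X × Bool)) [IsProbabilityMeasure μ]
    (η : Bool → X → ℝ) (hη : ∀ a, Measurable (η a))
    (hη0 : ∀ a x, 0 ≤ η a x) (hη1 : ∀ a x, η a x ≤ 1)
    (p : Bool → ℝ) (hp : ∀ a, 0 < p a)
    (hpdef : ∀ a, p a = (μ {q : X × Bool | q.2 = a}).toReal)
    (risk DDP : (X × Bool → ℝ) → ℝ)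
    (hrisk : ∀ g : X × Bool → ℝ,
      risk g = ∫ q, (g q * (1 - η q.2 q.1) + (1 - g q) * η q.2 q.1) ∂μ)
    (hDDP : ∀ g : X × Bool → ℝ,
      DDP g = ∫ q, g q * ((if q.2 then (1:ℝ) else -1) / p q.2) ∂μ)
    (δ s : ℝ) (hδ : 0 ≤ δ) (hs : 0 ≤ s)
    (τ : Bool → ℝ) (hτ0 : ∀ a, 0 ≤ τ a) (hτ1 : ∀ a, τ a ≤ 1)
    (f : X × Bool → ℝ) (hfm : Measurable f)
    (hfdef : ∀ (x : X) (a : Bool), f (x, a) =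
      if η a x > 1/2 + (if a then (1:ℝ) else -1) * s / (2 * p a) then 1
      else if η a x = 1/2 + (if a then (1:ℝ) else -1) * s / (2 * p a) then τ a
      else 0)
    (hfddp : DDP f = δ) :
    ∀ g : X × Bool → ℝ, Measurable g → (∀ q, 0 ≤ g q) → (∀ q, g q ≤ 1) →
      DDP g ≤ δ → risk f ≤ risk g :=
  stmt_11_general μ η hη hη0 hη1 p risk DDP hrisk hDDP δ s hs τ hτ0 hτ1 f hfm hfdef hfddp
end

section
/- Fair cost-sensitive Bayes-optimal classifier under demographic parity: With c ∈ (0,1), δ ≥ 0, A ∈ {0,1}, p_a = P(A=a) > 0, and assuming η_a(X) atomless under P_{X|A=a} for a ∈ {0,1}: if t ∈ ℝ is such that the deterministic classifier f_t(x,a) = 1{η_a(x) > c + (2a−1)t/p_a} satisfies DDP(f_t) = δ and t·δ ≥ 0 in sign conventions (i.e., t has the same sign as the unconstrained disparity), then f_t minimizes the cost-sensitive risk R_c among all randomized classifiers g with |DDP(g)| ≤ δ and DDP(g) of the same sign. -/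
/-!
Neyman–Pearson argument. Writing the parity gap as `∫ g w` with `w = (2a - 1) / p_a`, one has
`R_c(g) - R_c(f_t) = ∫ (f_t - g)(η - c)`, and `f_t` is the threshold classifier of `η` at
`c + t w`, so `(f_t - g)(η - c - t w) ≥ 0` pointwise. Integrating gives
`R_c(g) - R_c(f_t) ≥ t (DDP(f_t) - DDP(g)) = t (δ - DDP(g))`, and the last product is
nonnegative because `t` has the sign of `δ` while `DDP(g)` lies between `-|δ|` and `|δ|`.
-/

open MeasureTheory

section NeymanPearson

variable {Ω : Type*} [MeasurableSpace Ω] {μ : Measure Ω}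

/-- `R_c(g)` of the randomised rule `g` (the probability of predicting `1`) when
`s = P(Y = 1 | ·)`. -/
noncomputable def costRisk (μ : Measure Ω) (c : ℝ) (s g : Ω → ℝ) : ℝ :=
  ∫ q, (c * g q * (1 - s q) + (1 - c) * (1 - g q) * s q) ∂μ

lemma threshold_sub_mul_sub_nonneg {s θ g : ℝ} (hg0 : 0 ≤ g) (hg1 : g ≤ 1) :
    0 ≤ ((if θ < s then 1 else 0) - g) * (s - θ) := by
  split_ifs with h
  · exact mul_nonneg (by linarith) (by linarith)
  · exact mul_nonneg_of_nonpos_of_nonpos (by linarith) (by linarith)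

lemma MeasureTheory.Integrable.mul_of_unitInterval {f g : Ω → ℝ} (hf : Integrable f μ)
    (hg : Measurable g) (hg0 : ∀ q, 0 ≤ g q) (hg1 : ∀ q, g q ≤ 1) :
    Integrable (fun q => g q * f q) μ :=
  hf.bdd_mul hg.aestronglyMeasurable (c := 1) <| ae_of_all _ fun q => by
    rw [Real.norm_eq_abs, abs_le]
    exact ⟨by linarith [hg0 q], hg1 q⟩

variable [IsFiniteMeasure μ] {c : ℝ} {s g f : Ω → ℝ}

lemma costRisk_sub_costRisk (hs : Integrable s μ)
    (hg : Measurable g) (hg0 : ∀ q, 0 ≤ g q) (hg1 : ∀ q, g q ≤ 1)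
    (hf : Measurable f) (hf0 : ∀ q, 0 ≤ f q) (hf1 : ∀ q, f q ≤ 1) :
    costRisk μ c s g - costRisk μ c s f = ∫ q, (f q - g q) * (s q - c) ∂μ := by
  have hcs : Integrable (fun q => c - s q) μ := (integrable_const c).sub hs
  have hsplit : ∀ h : Ω → ℝ, Measurable h → (∀ q, 0 ≤ h q) → (∀ q, h q ≤ 1) →
      costRisk μ c s h = ∫ q, (1 - c) * s q ∂μ + ∫ q, h q * (c - s q) ∂μ := by
    intro h hh hh0 hh1
    rw [costRisk, ← integral_add (hs.const_mul _) (hcs.mul_of_unitInterval hh hh0 hh1)]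
    congr 1 with q
    ring
  rw [hsplit g hg hg0 hg1, hsplit f hf hf0 hf1, add_sub_add_left_eq_sub,
    ← integral_sub (hcs.mul_of_unitInterval hg hg0 hg1) (hcs.mul_of_unitInterval hf hf0 hf1)]
  congr 1 with q
  ring

theorem costRisk_threshold_le {w : Ω → ℝ} {t : ℝ} (hs_meas : Measurable s)
    (hs : Integrable s μ) (hw_meas : Measurable w) (hw : Integrable w μ)
    (hg : Measurable g) (hg0 : ∀ q, 0 ≤ g q) (hg1 : ∀ q, g q ≤ 1)
    (hf : f = fun q => if c + t * w q < s q then 1 else 0) :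
    t * (∫ q, f q * w q ∂μ - ∫ q, g q * w q ∂μ) + costRisk μ c s f ≤ costRisk μ c s g := by
  have hf_meas : Measurable f := hf ▸
    Measurable.ite (measurableSet_lt (measurable_const.add (hw_meas.const_mul t)) hs_meas)
      measurable_const measurable_const
  have hf_apply (q : Ω) : f q = if c + t * w q < s q then 1 else 0 := congrFun hf q
  have hf0 (q : Ω) : 0 ≤ f q := by rw [hf_apply]; split_ifs <;> norm_num
  have hf1 (q : Ω) : f q ≤ 1 := by rw [hf_apply]; split_ifs <;> norm_num
  have hfw := hw.mul_of_unitInterval hf_meas hf0 hf1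
  have hgw := hw.mul_of_unitInterval hg hg0 hg1
  have hcs : Integrable (fun q => s q - c) μ := hs.sub (integrable_const c)
  have hdiff : Integrable (fun q => (f q - g q) * (s q - c)) μ :=
    ((hcs.mul_of_unitInterval hf_meas hf0 hf1).sub (hcs.mul_of_unitInterval hg hg0 hg1)).congr
      (ae_of_all _ fun q => by simp only [Pi.sub_apply]; ring)
  have hlin : Integrable (fun q => t * (f q * w q - g q * w q)) μ := (hfw.sub hgw).const_mul t
  have hlagrangian : 0 ≤ ∫ q, (f q - g q) * (s q - c) ∂μ
      - t * (∫ q, f q * w q ∂μ - ∫ q, g q * w q ∂μ) := by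
    rw [← integral_sub hfw hgw, ← integral_const_mul, ← integral_sub hdiff hlin]
    refine integral_nonneg fun q => ?_
    have hpt := threshold_sub_mul_sub_nonneg (θ := c + t * w q) (s := s q) (hg0 q) (hg1 q)
    rw [← hf_apply] at hpt
    rw [Pi.zero_apply]
    linarith
  linarith [costRisk_sub_costRisk (c := c) hs hg hg0 hg1 hf_meas hf0 hf1]

end NeymanPearson

lemma mul_sub_nonneg_of_abs_le_abs {t δ d : ℝ} (htδ : 0 ≤ t * δ) (hd : |d| ≤ |δ|) :
    0 ≤ t * (δ - d) := by
  rcases lt_trichotomy δ 0 with hδ | rfl | hδ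
  · have ht : t ≤ 0 := nonpos_of_mul_nonneg_left htδ hδ
    rw [abs_of_neg hδ] at hd
    exact mul_nonneg_of_nonpos_of_nonpos ht (by linarith [neg_abs_le d])
  · simp_all
  · have ht : 0 ≤ t := nonneg_of_mul_nonneg_left htδ hδ
    rw [abs_of_pos hδ] at hd
    exact mul_nonneg ht (by linarith [le_abs_self d])

lemma integrable_comp_snd_of_finite {X B : Type*} [MeasurableSpace X] [MeasurableSpace B]
    [Fintype B] [MeasurableSingletonClass B] {μ : Measure (X × B)} [IsFiniteMeasure μ]
    (φ : B → ℝ) : Integrable (fun q => φ q.2) μ :=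
  .of_bound (measurable_of_countable φ |>.comp measurable_snd).aestronglyMeasurable
    (∑ b, |φ b|) <| ae_of_all _ fun q =>
      Finset.single_le_sum (f := fun b => |φ b|) (fun _ _ => abs_nonneg _) (Finset.mem_univ q.2)

theorem stmt_13_general {X : Type*} [MeasurableSpace X]
    (μ : Measure (X × Bool)) [IsProbabilityMeasure μ]
    (η : Bool → X → ℝ) (hη : ∀ a, Measurable (η a))
    (hη0 : ∀ a x, 0 ≤ η a x) (hη1 : ∀ a x, η a x ≤ 1)
    (p : Bool → ℝ)
    (c : ℝ)
    (riskc DDP : (X × Bool → ℝ) → ℝ)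
    (hrisk : ∀ g : X × Bool → ℝ,
      riskc g = ∫ q, (c * g q * (1 - η q.2 q.1) + (1 - c) * (1 - g q) * η q.2 q.1) ∂μ)
    (hDDP : ∀ g : X × Bool → ℝ,
      DDP g = ∫ q, g q * ((if q.2 then (1:ℝ) else -1) / p q.2) ∂μ)
    (δ t : ℝ)
    (ft : X × Bool → ℝ)
    (hft : ∀ (x : X) (a : Bool), ft (x, a) =
      if η a x > c + (if a then (1:ℝ) else -1) * t / p a then 1 else 0)
    (hftddp : DDP ft = δ) (hsign : 0 ≤ t * δ) :
    ∀ g : X × Bool → ℝ, Measurable g → (∀ q, 0 ≤ g q) → (∀ q, g q ≤ 1) →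
      |DDP g| ≤ |δ| → 0 ≤ DDP g * δ → riskc ft ≤ riskc g := by
  intro g hg hg0 hg1 hgδ _
  set w : X × Bool → ℝ := fun q => (if q.2 then (1:ℝ) else -1) / p q.2
  have hs_meas : Measurable fun q : X × Bool => η q.2 q.1 :=
    measurable_from_prod_countable_left fun a => hη a
  have hs : Integrable (fun q : X × Bool => η q.2 q.1) μ :=
    .of_bound hs_meas.aestronglyMeasurable 1 <| ae_of_all _ fun q => by
      rw [Real.norm_eq_abs, abs_le]
      exact ⟨by linarith [hη0 q.2 q.1], hη1 q.2 q.1⟩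
  have hft_threshold : ft = fun q => if c + t * w q < η q.2 q.1 then 1 else 0 := by
    funext ⟨x, a⟩
    rw [hft, show (if a then (1:ℝ) else -1) * t / p a = t * w (x, a) by ring]
  have hw_meas : Measurable w :=
    (measurable_of_countable fun a : Bool => (if a then (1:ℝ) else -1) / p a).comp measurable_snd
  have hw : Integrable w μ :=
    integrable_comp_snd_of_finite fun a : Bool => (if a then (1:ℝ) else -1) / p a
  have hNP := costRisk_threshold_le hs_meas hs hw_meas hw hg hg0 hg1 hft_threshold
  rw [← hDDP, ← hDDP, hftddp] at hNP
  have hrisk' (g) : riskc g = costRisk μ c (fun q => η q.2 q.1) g := hrisk g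
  rw [hrisk', hrisk']
  linarith [mul_sub_nonneg_of_abs_le_abs hsign hgδ]

theorem stmt_13 {X : Type*} [MeasurableSpace X]
    (μ : Measure (X × Bool)) [IsProbabilityMeasure μ]
    (η : Bool → X → ℝ) (hη : ∀ a, Measurable (η a))
    (hη0 : ∀ a x, 0 ≤ η a x) (hη1 : ∀ a x, η a x ≤ 1)
    (p : Bool → ℝ) (hp : ∀ a, 0 < p a)
    (hpdef : ∀ a, p a = (μ {q : X × Bool | q.2 = a}).toReal)
    (hatomless : ∀ (a : Bool) (u : ℝ), μ {q : X × Bool | q.2 = a ∧ η a q.1 = u} = 0)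
    (c : ℝ) (hc0 : 0 < c) (hc1 : c < 1)
    (riskc DDP : (X × Bool → ℝ) → ℝ)
    (hrisk : ∀ g : X × Bool → ℝ,
      riskc g = ∫ q, (c * g q * (1 - η q.2 q.1) + (1 - c) * (1 - g q) * η q.2 q.1) ∂μ)
    (hDDP : ∀ g : X × Bool → ℝ,
      DDP g = ∫ q, g q * ((if q.2 then (1:ℝ) else -1) / p q.2) ∂μ)
    (δ t : ℝ)
    (ft : X × Bool → ℝ)
    (hft : ∀ (x : X) (a : Bool), ft (x, a) =
      if η a x > c + (if a then (1:ℝ) else -1) * t / p a then 1 else 0)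
    (hftddp : DDP ft = δ) (hsign : 0 ≤ t * δ) :
    ∀ g : X × Bool → ℝ, Measurable g → (∀ q, 0 ≤ g q) → (∀ q, g q ≤ 1) →
      |DDP g| ≤ |δ| → 0 ≤ DDP g * δ → riskc ft ≤ riskc g :=
  stmt_13_general μ η hη hη0 hη1 p c riskc DDP hrisk hDDP δ t ft hft hftddp hsign
end
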